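/- Let X be an infinite dimensional operator space. If for every proper closed nontrivial subspace Y of X the quotient operator space X/Y is minimal, then X is minimal. In particular, ‖[x_ij]‖_{M_n(X)} = sup{‖[x_ij + Y]‖_{M_n(X/Y)} : Y ⊆ X closed, dim(X/Y) < ∞} and this supremum equals ‖[x_ij]‖_{M_n(Min(X))}. -/

import Mathlib

/-!
A functional `F` on `M_n(X)` norming `x` (Hahn–Banach) is the sum of its `n²` entry functionals
`v ↦ F (E_ij ⊗ v)`, each contractive by Ruan's axioms. The intersection `Y` of their kernels is
a closed subspace of finite codimension and `F` vanishes on `M_n(Y)`, so `x` keeps its norm in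
`M_n(X/Y)`: this is the supremum formula. As `X` is infinite dimensional, `Y ≠ 0`, so `X/Y` is
minimal and `‖x‖ = ‖x + Y‖_{Min(X/Y)} ≤ ‖x‖_{Min(X)}`. Conversely, a contractive functional
`f ≠ 0` factors contractively through the minimal quotient `X / ker f`, so `‖f(x)‖ ≤ ‖x‖`.
-/

noncomputable section

namespace OSP

/-- A sequence of matrix norms (as bare functions) on a type `X`. -/
abbrev MatNorms (X : Type) : Type := ∀ n : ℕ, Matrix (Fin n) (Fin n) X → ℝ

/-- The operator norm of a scalar matrix, viewed as an operator on Euclidean space. -/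
def scNorm {m : Type} [Fintype m] [DecidableEq m] (A : Matrix m m ℂ) : ℝ :=
  ‖Matrix.toEuclideanCLM (𝕜 := ℂ) (n := m) A‖

/-- The two-sided scalar multiplication `a · x · b` of a matrix over `X` by scalar matrices. -/
def smulMat {X : Type} [AddCommGroup X] [Module ℂ X] {n : ℕ}
    (a : Matrix (Fin n) (Fin n) ℂ) (x : Matrix (Fin n) (Fin n) X)
    (b : Matrix (Fin n) (Fin n) ℂ) : Matrix (Fin n) (Fin n) X :=
  Matrix.of fun i j => ∑ k, ∑ l, (a i k * b l j) • x k l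

/-- An (admissible, abstract) operator space structure on a normed space `X`:
a sequence of matrix norms satisfying Ruan's axioms whose first level is the norm of `X`. -/
structure OSS (X : Type) [NormedAddCommGroup X] [NormedSpace ℂ X] where
  N : MatNorms X
  nonneg : ∀ n x, 0 ≤ N n x
  add_le : ∀ n (x y : Matrix (Fin n) (Fin n) X), N n (x + y) ≤ N n x + N n y
  smul_eq : ∀ n (c : ℂ) (x : Matrix (Fin n) (Fin n) X), N n (c • x) = ‖c‖ * N n x
  eq_zero : ∀ n (x : Matrix (Fin n) (Fin n) X), N n x = 0 → x = 0
  level_one : ∀ x : X, N 1 (Matrix.of fun _ _ => x) = ‖x‖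
  ruan_mul : ∀ n (a b : Matrix (Fin n) (Fin n) ℂ) (x : Matrix (Fin n) (Fin n) X),
    N n (smulMat a x b) ≤ scNorm a * N n x * scNorm b
  ruan_block : ∀ (n m : ℕ) (x : Matrix (Fin n) (Fin n) X) (y : Matrix (Fin m) (Fin m) X),
    N (n + m) ((Matrix.fromBlocks x 0 0 y).submatrix finSumFinEquiv.symm finSumFinEquiv.symm)
      = max (N n x) (N m y)

/-- A bundled operator space. -/
structure OpSpace where
  carrier : Type
  [grp : NormedAddCommGroup carrier]
  [mod : NormedSpace ℂ carrier]
  str : OSS carrier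

attribute [instance] OpSpace.grp OpSpace.mod

/-- `f` amplifies with bound `C` at all matrix levels. -/
def ampBound {X Y : Type} (NX : MatNorms X) (NY : MatNorms Y) (f : X → Y) (C : ℝ) : Prop :=
  ∀ n (x : Matrix (Fin n) (Fin n) X), NY n (x.map f) ≤ C * NX n x

/-- `f` is completely bounded. -/
def CompletelyBounded {X Y : Type} (NX : MatNorms X) (NY : MatNorms Y) (f : X → Y) : Prop :=
  ∃ C, 0 ≤ C ∧ ampBound NX NY f C

/-- The completely bounded norm of `f`. -/
def cbNorm {X Y : Type} (NX : MatNorms X) (NY : MatNorms Y) (f : X → Y) : ℝ :=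
  sInf {C | 0 ≤ C ∧ ampBound NX NY f C}

/-- The matrix norms of the minimal operator space structure `Min X`. -/
def minN (X : Type) [NormedAddCommGroup X] [NormedSpace ℂ X] : MatNorms X :=
  fun n x => sSup {r | ∃ f : X →L[ℂ] ℂ, ‖f‖ ≤ 1 ∧ r = scNorm (x.map ⇑f)}

/-- The matrix norms of the maximal operator space structure `Max X`. -/
def maxN (X : Type) [NormedAddCommGroup X] [NormedSpace ℂ X] : MatNorms X :=
  fun n x => sSup {r | ∃ (Z : OpSpace) (u : X →L[ℂ] Z.carrier), ‖u‖ ≤ 1 ∧ r = Z.str.N n (x.map ⇑u)}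

/-- The inherited (subspace) matrix norms on a submodule. -/
def subN {X : Type} [NormedAddCommGroup X] [NormedSpace ℂ X]
    (NX : MatNorms X) (Y : Submodule ℂ X) : MatNorms Y :=
  fun n x => NX n (x.map ⇑Y.subtype)

/-- The quotient matrix norms on `X ⧸ Y`. -/
def quotN {X : Type} [NormedAddCommGroup X] [NormedSpace ℂ X]
    (NX : MatNorms X) (Y : Submodule ℂ X) : MatNorms (X ⧸ Y) :=
  fun n z => sInf {r | ∃ x : Matrix (Fin n) (Fin n) X, x.map ⇑Y.mkQ = z ∧ r = NX n x}

/-- The canonical operator space matrix norms on `M_d(ℂ)`. -/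
def MnN (d : ℕ) : MatNorms (Matrix (Fin d) (Fin d) ℂ) :=
  fun n x => scNorm (Matrix.of fun p q : Fin n × Fin d => x p.1 q.1 p.2 q.2)

/-- The dual matrix norms on `X* = X →L[ℂ] ℂ`, via `M_n(X*) = CB(X, M_n)`. -/
def dualN {X : Type} [NormedAddCommGroup X] [NormedSpace ℂ X] (NX : MatNorms X) :
    MatNorms (X →L[ℂ] ℂ) :=
  fun n F => cbNorm NX (MnN n) (fun x => Matrix.of fun i j => F i j x)

/-- The annihilator `Y⊥` of a subspace `Y ⊆ X` inside the dual `X*`. -/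
def ann {X : Type} [NormedAddCommGroup X] [NormedSpace ℂ X] (Y : Submodule ℂ X) :
    Submodule ℂ (X →L[ℂ] ℂ) where
  carrier := {f | ∀ y ∈ Y, f y = 0}
  add_mem' := by intro f g hf hg y hy; simp [hf y hy, hg y hy]
  zero_mem' := by intro y hy; simp
  smul_mem' := by intro c f hf y hy; simp [hf y hy]

/-- A complete quotient map: every amplification maps the open unit ball onto the open unit ball. -/
def CompleteQuotientMap {X Z : Type} (NX : MatNorms X) (NZ : MatNorms Z) (f : X → Z) : Prop :=
  ∀ n, (fun x : Matrix (Fin n) (Fin n) X => x.map f) '' {x | NX n x < 1} = {z | NZ n z < 1}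

end OSP

namespace OSP

variable {X : Type} [NormedAddCommGroup X] [NormedSpace ℂ X]

/-- The quotient map `X → X ⧸ Y` as a continuous linear map. -/
def mkQCLM (Y : Submodule ℂ X) [IsClosed (Y : Set X)] : X →L[ℂ] X ⧸ Y :=
  Y.mkQ.mkContinuous 1 fun x => by
    simpa using Submodule.Quotient.norm_mk_le Y x

/-- Precomposition with the quotient map: the canonical embedding `(X/Y)* → X*`,
whose range is the annihilator `Y⊥`. -/
def pullQ (Y : Submodule ℂ X) [IsClosed (Y : Set X)] :
    ((X ⧸ Y) →L[ℂ] ℂ) →ₗ[ℂ] (X →L[ℂ] ℂ) where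
  toFun f := f.comp (mkQCLM Y)
  map_add' := by intro f g; ext x; simp
  map_smul' := by intro c f; ext x; simp

/-- The restriction map `X* → Y*`. -/
def resMap (Y : Submodule ℂ X) : (X →L[ℂ] ℂ) →ₗ[ℂ] (Y →L[ℂ] ℂ) where
  toFun f := f.comp Y.subtypeL
  map_add' := by intro f g; ext x; simp
  map_smul' := by intro c f; ext x; simp

theorem ann_le_ker_resMap (Y : Submodule ℂ X) : ann Y ≤ LinearMap.ker (resMap Y) := by
  intro f hf
  simp only [LinearMap.mem_ker]
  ext y
  exact hf y y.2

/-- The canonical map `X*/Y⊥ → Y*` induced by restriction. -/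
def resQbar (Y : Submodule ℂ X) : ((X →L[ℂ] ℂ) ⧸ ann Y) →ₗ[ℂ] (Y →L[ℂ] ℂ) :=
  (ann Y).liftQ (resMap Y) (ann_le_ker_resMap Y)

end OSP

lemma Submodule.norm_liftQL_le {𝕜 E F : Type*} [NontriviallyNormedField 𝕜]
    [SeminormedAddCommGroup E] [NormedSpace 𝕜 E] [SeminormedAddCommGroup F] [NormedSpace 𝕜 F]
    (S : Submodule 𝕜 E) (f : E →L[𝕜] F) (hf : S ≤ f.ker) : ‖S.liftQL f hf‖ ≤ ‖f‖ := by
  let f' := (f : E →+ F).mkNormedAddGroupHom ‖f‖ f.le_opNorm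
  refine ContinuousLinearMap.opNorm_le_bound _ (norm_nonneg f) fun z => ?_
  calc ‖S.liftQL f hf z‖ ≤ ‖f'‖ * ‖z‖ :=
        QuotientAddGroup.norm_lift_apply_le (S := S.toAddSubgroup) f' (fun y hy => hf hy) z
    _ ≤ ‖f‖ * ‖z‖ := by
        gcongr
        exact AddMonoidHom.mkNormedAddGroupHom_norm_le _ (norm_nonneg f) _

lemma Submodule.ne_bot_of_finiteDimensional_quotient {K V : Type*} [DivisionRing K]
    [AddCommGroup V] [Module K V] (hV : ¬ FiniteDimensional K V) {Y : Submodule K V}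
    (hY : FiniteDimensional K (V ⧸ Y)) : Y ≠ ⊥ := by
  rintro rfl
  exact hV (Submodule.quotEquivOfEqBot ⊥ rfl).finiteDimensional

namespace OSP

section ScalarMatrix

variable {m : Type} [Fintype m] [DecidableEq m]

lemma scNorm_zero : scNorm (0 : Matrix m m ℂ) = 0 := by
  rw [scNorm, map_zero, norm_zero]

lemma scNorm_single_le (i j : m) (c : ℂ) : scNorm (Matrix.single i j c) ≤ ‖c‖ := by
  refine ContinuousLinearMap.opNorm_le_bound _ (norm_nonneg c) fun u => ?_
  rw [← WithLp.toLp_ofLp (p := 2) u, Matrix.toEuclideanCLM_toLp, Matrix.single_mulVec]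
  change ‖PiLp.single (β := fun _ : m => ℂ) 2 i (c * u j)‖ ≤ ‖c‖ * ‖u‖
  rw [PiLp.norm_single, norm_mul]
  exact mul_le_mul_of_nonneg_left (PiLp.norm_apply_le _ j) (norm_nonneg c)

lemma scNorm_le_sum_norm (A : Matrix m m ℂ) : scNorm A ≤ ∑ i, ∑ j, ‖A i j‖ := by
  conv_lhs => rw [scNorm, Matrix.matrix_eq_sum_single A]
  simp only [map_sum]
  exact (norm_sum_le _ _).trans (Finset.sum_le_sum fun i _ =>
    (norm_sum_le _ _).trans (Finset.sum_le_sum fun j _ => scNorm_single_le i j _))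

end ScalarMatrix

namespace OSS

variable {X : Type} [NormedAddCommGroup X] [NormedSpace ℂ X] (os : OSS X)

lemma N_zero (n : ℕ) : os.N n 0 = 0 := by
  simpa using os.smul_eq n 0 0

lemma N_neg {n : ℕ} (x : Matrix (Fin n) (Fin n) X) : os.N n (-x) = os.N n x := by
  simpa using os.smul_eq n (-1) x

/-- A type synonym for `M_n(X)` normed by `os.N n`, to which Hahn–Banach applies. -/
def Mat (_os : OSS X) (n : ℕ) : Type := Matrix (Fin n) (Fin n) X

instance (n : ℕ) : AddCommGroup (os.Mat n) :=
  inferInstanceAs (AddCommGroup (Matrix (Fin n) (Fin n) X))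

instance (n : ℕ) : Module ℂ (os.Mat n) :=
  inferInstanceAs (Module ℂ (Matrix (Fin n) (Fin n) X))

instance (n : ℕ) : NormedAddCommGroup (os.Mat n) :=
  AddGroupNorm.toNormedAddCommGroup
    { toFun := os.N n
      map_zero' := os.N_zero n
      add_le' := os.add_le n
      neg' := os.N_neg
      eq_zero_of_map_eq_zero' := os.eq_zero n }

instance (n : ℕ) : NormedSpace ℂ (os.Mat n) :=
  ⟨fun c x => (os.smul_eq n c x).le⟩

lemma N_single_corner (m : ℕ) (v : X) :
    let o : Fin (1 + m) := finSumFinEquiv (.inl 0)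
    os.N (1 + m) (Matrix.single o o v) = ‖v‖ := by
  intro o
  have hblock : (Matrix.fromBlocks (Matrix.of fun _ _ => v) 0 0
      (0 : Matrix (Fin m) (Fin m) X)).submatrix finSumFinEquiv.symm finSumFinEquiv.symm
      = Matrix.single o o v := by
    ext p q
    obtain ⟨p, rfl⟩ := finSumFinEquiv.surjective p
    obtain ⟨q, rfl⟩ := finSumFinEquiv.surjective q
    simp only [Matrix.submatrix_apply, Equiv.symm_apply_apply, Matrix.single_apply, o,
      EmbeddingLike.apply_eq_iff_eq]
    rcases p with p | p <;> rcases q with q | q <;> simp [Fin.fin_one_eq_zero]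
  rw [← hblock, os.ruan_block, os.level_one, os.N_zero, max_eq_left (norm_nonneg v)]

lemma N_single_le {n : ℕ} (i j : Fin n) (v : X) : os.N n (Matrix.single i j v) ≤ ‖v‖ := by
  obtain ⟨m, rfl⟩ : ∃ m, n = 1 + m := ⟨n - 1, by have := i.pos; omega⟩
  set o : Fin (1 + m) := finSumFinEquiv (.inl 0)
  have hfactor : Matrix.single i j v =
      smulMat (Matrix.single i o (1 : ℂ)) (Matrix.single o o v) (Matrix.single o j 1) := by
    ext p q
    simp only [smulMat, Matrix.of_apply, Matrix.single_apply]
    by_cases hp : i = p <;> by_cases hq : j = q <;> simp [hp, hq, ite_and]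
  calc os.N (1 + m) (Matrix.single i j v)
      ≤ scNorm (Matrix.single i o (1 : ℂ)) * ‖v‖ * scNorm (Matrix.single o j (1 : ℂ)) := by
        rw [hfactor, ← os.N_single_corner m v]; exact os.ruan_mul _ _ _ _
    _ ≤ 1 * ‖v‖ * 1 := by
        gcongr
        · exact norm_nonneg _
        · simpa using scNorm_single_le i o (1 : ℂ)
        · simpa using scNorm_single_le o j (1 : ℂ)
    _ = ‖v‖ := by ring

lemma quotN_map_mkQ_le (Y : Submodule ℂ X) {n : ℕ} (x : Matrix (Fin n) (Fin n) X) :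
    quotN os.N Y n (x.map Y.mkQ) ≤ os.N n x :=
  csInf_le ⟨0, by rintro _ ⟨x', -, rfl⟩; exact os.nonneg n x'⟩ ⟨x, rfl, rfl⟩

lemma exists_norming_functional {n : ℕ} (x : Matrix (Fin n) (Fin n) X) :
    ∃ G : Matrix (Fin n) (Fin n) X →ₗ[ℂ] ℂ, (∀ w, ‖G w‖ ≤ os.N n w) ∧ G x = os.N n x := by
  obtain ⟨F, hF, hFx⟩ := exists_dual_vector'' ℂ (show os.Mat n from x)
  exact ⟨F.toLinearMap, fun w => (F.le_opNorm w).trans (mul_le_of_le_one_left (os.nonneg n w) hF),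
    hFx⟩

lemma exists_finiteCodim_quotN_eq {n : ℕ} (x : Matrix (Fin n) (Fin n) X) :
    ∃ Y : Submodule ℂ X, IsClosed (Y : Set X) ∧ FiniteDimensional ℂ (X ⧸ Y) ∧
      quotN os.N Y n (x.map Y.mkQ) = os.N n x := by
  obtain ⟨G, hG, hGx⟩ := os.exists_norming_functional x
  let entry : Fin n × Fin n → StrongDual ℂ X := fun p =>
    (G.comp (Matrix.singleLinearMap ℂ p.1 p.2)).mkContinuous 1 fun v =>
      by rw [one_mul]; exact (hG _).trans (os.N_single_le p.1 p.2 v)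
  let Φ := ContinuousLinearMap.pi entry
  have hG_vanish : ∀ w, (∀ i j, w i j ∈ Φ.ker) → G w = 0 := fun w hw => by
    conv_lhs => rw [Matrix.matrix_eq_sum_single w]
    simp only [map_sum]
    exact Finset.sum_eq_zero fun i _ => Finset.sum_eq_zero fun j _ => congrFun (hw i j) (i, j)
  refine ⟨Φ.ker, Φ.isClosed_ker,
    (LinearMap.quotKerEquivRange Φ.toLinearMap).symm.finiteDimensional,
    le_antisymm (os.quotN_map_mkQ_le _ x) (le_csInf ⟨_, x, rfl, rfl⟩ ?_)⟩
  rintro _ ⟨x', hx', rfl⟩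
  have hGx' : G x' = G x := by
    rw [← sub_eq_zero, ← map_sub]
    refine hG_vanish _ fun i j => ?_
    rw [← Submodule.Quotient.mk_eq_zero, Matrix.sub_apply, Submodule.Quotient.mk_sub,
      sub_eq_zero]
    exact congrFun (congrFun hx' i) j
  calc os.N n x = ‖G x‖ := by rw [hGx, Complex.norm_real, Real.norm_of_nonneg (os.nonneg n x)]
    _ = ‖G x'‖ := by rw [hGx']
    _ ≤ os.N n x' := hG x'

lemma N_eq_sSup_quotN {n : ℕ} (x : Matrix (Fin n) (Fin n) X) :
    os.N n x = sSup {r | ∃ Y : Submodule ℂ X, IsClosed (Y : Set X) ∧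
      FiniteDimensional ℂ (X ⧸ Y) ∧ r = quotN os.N Y n (x.map Y.mkQ)} := by
  obtain ⟨Y, hYc, hYfin, hYx⟩ := os.exists_finiteCodim_quotN_eq x
  refine Eq.symm (IsGreatest.csSup_eq ⟨⟨Y, hYc, hYfin, hYx.symm⟩, ?_⟩)
  rintro _ ⟨Y', -, -, rfl⟩
  exact os.quotN_map_mkQ_le Y' x

end OSS

section MinimalNorms

variable {Z : Type} [NormedAddCommGroup Z] [NormedSpace ℂ Z]

lemma scNorm_map_le_minN {n : ℕ} (z : Matrix (Fin n) (Fin n) Z) {f : StrongDual ℂ Z}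
    (hf : ‖f‖ ≤ 1) : scNorm (z.map f) ≤ minN Z n z := by
  have hbdd : BddAbove {r | ∃ g : StrongDual ℂ Z, ‖g‖ ≤ 1 ∧ r = scNorm (z.map g)} := by
    refine ⟨∑ i, ∑ j, ‖z i j‖, ?_⟩
    rintro _ ⟨g, hg, rfl⟩
    refine (scNorm_le_sum_norm _).trans
      (Finset.sum_le_sum fun i _ => Finset.sum_le_sum fun j _ => ?_)
    exact (g.le_opNorm _).trans (mul_le_of_le_one_left (norm_nonneg _) hg)
  exact le_csSup hbdd ⟨f, hf, rfl⟩

lemma scNorm_map_zero {n : ℕ} (z : Matrix (Fin n) (Fin n) Z) :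
    scNorm (z.map (0 : StrongDual ℂ Z)) = 0 := by
  rw [show z.map (0 : StrongDual ℂ Z) = 0 by ext; simp, scNorm_zero]

lemma minN_nonneg {n : ℕ} (z : Matrix (Fin n) (Fin n) Z) : 0 ≤ minN Z n z :=
  scNorm_map_zero z ▸ scNorm_map_le_minN z (f := 0) (by simp)

lemma minN_map_mkQ_le (Y : Submodule ℂ Z) [IsClosed (Y : Set Z)] {n : ℕ}
    (z : Matrix (Fin n) (Fin n) Z) : minN (Z ⧸ Y) n (z.map Y.mkQ) ≤ minN Z n z := by
  refine Real.sSup_le ?_ (minN_nonneg z)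
  rintro _ ⟨g, hg, rfl⟩
  refine le_of_eq_of_le ?_ (scNorm_map_le_minN z (f := g.comp (mkQCLM Y)) ?_)
  · rw [Matrix.map_map]; rfl
  · exact (g.opNorm_comp_le _).trans
      (mul_le_one₀ hg (norm_nonneg _) (LinearMap.mkContinuous_norm_le _ zero_le_one _))

end MinimalNorms

namespace OSS

variable {X : Type} [NormedAddCommGroup X] [NormedSpace ℂ X] (os : OSS X)

def HasMinimalQuotients : Prop :=
  ∀ (Y : Submodule ℂ X) [IsClosed (Y : Set X)], Y ≠ ⊥ → Y ≠ ⊤ →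
    ∀ (n : ℕ) (z : Matrix (Fin n) (Fin n) (X ⧸ Y)), quotN os.N Y n z = minN (X ⧸ Y) n z

variable {os}

lemma N_le_minN (hX : ¬ FiniteDimensional ℂ X) (hmin : os.HasMinimalQuotients) {n : ℕ}
    (x : Matrix (Fin n) (Fin n) X) : os.N n x ≤ minN X n x := by
  obtain ⟨Y, hYc, hYfin, hYx⟩ := os.exists_finiteCodim_quotN_eq x
  rcases eq_or_ne Y ⊤ with rfl | hYtop
  · calc os.N n x = quotN os.N ⊤ n (x.map (⊤ : Submodule ℂ X).mkQ) := hYx.symm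
      _ = quotN os.N ⊤ n ((0 : Matrix (Fin n) (Fin n) X).map (⊤ : Submodule ℂ X).mkQ) := by
          congr 1; exact Subsingleton.elim _ _
      _ ≤ os.N n 0 := os.quotN_map_mkQ_le ⊤ 0
      _ = 0 := os.N_zero n
      _ ≤ minN X n x := minN_nonneg x
  · have := hYc
    calc os.N n x = quotN os.N Y n (x.map Y.mkQ) := hYx.symm
      _ = minN (X ⧸ Y) n (x.map Y.mkQ) :=
          hmin Y (Submodule.ne_bot_of_finiteDimensional_quotient hX hYfin) hYtop n _
      _ ≤ minN X n x := minN_map_mkQ_le Y x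

lemma minN_le_N (hX : ¬ FiniteDimensional ℂ X) (hmin : os.HasMinimalQuotients) {n : ℕ}
    (x : Matrix (Fin n) (Fin n) X) : minN X n x ≤ os.N n x := by
  refine Real.sSup_le ?_ (os.nonneg n x)
  rintro _ ⟨f, hf, rfl⟩
  rcases eq_or_ne f 0 with rfl | hf0
  · exact scNorm_map_zero x ▸ os.nonneg n x
  have hfin : FiniteDimensional ℂ (X ⧸ f.ker) :=
    (LinearMap.quotKerEquivRange f.toLinearMap).symm.finiteDimensional
  have htop : f.ker ≠ ⊤ := fun h =>
    hf0 (ContinuousLinearMap.coe_injective (LinearMap.ker_eq_top.mp h))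
  have : IsClosed (f.ker : Set X) := f.isClosed_ker
  calc scNorm (x.map f) = scNorm ((x.map f.ker.mkQ).map (f.ker.liftQL f le_rfl)) := by
        rw [Matrix.map_map]; rfl
    _ ≤ minN (X ⧸ f.ker) n (x.map f.ker.mkQ) :=
        scNorm_map_le_minN _ ((Submodule.norm_liftQL_le _ f _).trans hf)
    _ = quotN os.N f.ker n (x.map f.ker.mkQ) :=
        (hmin _ (Submodule.ne_bot_of_finiteDimensional_quotient hX hfin) htop n _).symm
    _ ≤ os.N n x := os.quotN_map_mkQ_le _ x

end OSS
end OSP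

theorem stmt19_general (X : Type) [NormedAddCommGroup X] [NormedSpace ℂ X]
    (os : OSP.OSS X) (hinf : ¬ FiniteDimensional ℂ X)
    (h : ∀ (Y : Submodule ℂ X) [IsClosed (Y : Set X)], Y ≠ ⊥ → Y ≠ ⊤ →
      ∀ (n : ℕ) (z : Matrix (Fin n) (Fin n) (X ⧸ Y)),
        OSP.quotN os.N Y n z = OSP.minN (X ⧸ Y) n z) :
    ∀ (n : ℕ) (x : Matrix (Fin n) (Fin n) X),
      os.N n x = OSP.minN X n x ∧
        os.N n x = sSup {r | ∃ Y : Submodule ℂ X, IsClosed (Y : Set X) ∧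
          FiniteDimensional ℂ (X ⧸ Y) ∧ r = OSP.quotN os.N Y n (x.map ⇑Y.mkQ)} := fun _ x =>
  ⟨le_antisymm (OSP.OSS.N_le_minN hinf h x) (OSP.OSS.minN_le_N hinf h x), os.N_eq_sSup_quotN x⟩

/-- if `X` is an infinite dimensional operator space such that the quotient
of `X` by every proper closed nontrivial subspace is minimal, then `X` is minimal; in
particular the matrix norms of `X` are the suprema of the quotient norms over closed
subspaces of finite codimension, and this supremum is the `Min(X)` norm. -/
theorem stmt19 (X : Type) [NormedAddCommGroup X] [NormedSpace ℂ X] [CompleteSpace X]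
    (os : OSP.OSS X) (hinf : ¬ FiniteDimensional ℂ X)
    (h : ∀ (Y : Submodule ℂ X) [IsClosed (Y : Set X)], Y ≠ ⊥ → Y ≠ ⊤ →
      ∀ (n : ℕ) (z : Matrix (Fin n) (Fin n) (X ⧸ Y)),
        OSP.quotN os.N Y n z = OSP.minN (X ⧸ Y) n z) :
    ∀ (n : ℕ) (x : Matrix (Fin n) (Fin n) X),
      os.N n x = OSP.minN X n x ∧
        os.N n x = sSup {r | ∃ Y : Submodule ℂ X, IsClosed (Y : Set X) ∧
          FiniteDimensional ℂ (X ⧸ Y) ∧ r = OSP.quotN os.N Y n (x.map ⇑Y.mkQ)} :=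
  stmt19_general X os hinf h
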